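/- Let n ≥ 3 and let i be an integer with 1 ≤ i ≤ n−2. Then the number of permutations p of {1,…,n} whose minmax tree T^m_p contains the entry p_i as a leaf is exactly n!/3. -/

import Mathlib

/-- Binary trees with natural-number labels, used to model minmax trees of
permutations. -/
inductive BTree where
  | nil : BTree
  | node : ℕ → BTree → BTree → BTree
deriving DecidableEq, Repr

namespace BTree

/-- The label of the root (if any). -/
def rootVal : BTree → Option ℕ
  | .nil => none
  | .node v _ _ => some v

/-- Whether the value `x` occurs as a label in the tree. -/
def memB : BTree → ℕ → Bool
  | .nil, _ => false
  | .node v l r, x => (x == v) || memB l x || memB r x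

/-- The number of children of the (unique, for permutations) node labelled `x`. -/
def numChildren : BTree → ℕ → ℕ
  | .nil, _ => 0
  | .node v l r, x =>
      if x = v then (if l = .nil then 0 else 1) + (if r = .nil then 0 else 1)
      else numChildren l x + numChildren r x

/-- `x` is a leaf of the tree: it occurs in the tree and has no children. -/
def IsLeaf (t : BTree) (x : ℕ) : Prop := t.memB x = true ∧ t.numChildren x = 0

instance (t : BTree) (x : ℕ) : Decidable (t.IsLeaf x) := by unfold IsLeaf; infer_instance

/-- `childB t x y = true` iff `x` is a child of `y` in `t`, i.e. `x` is the root of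
the left or the right subtree hanging from `y`. -/
def childB : BTree → ℕ → ℕ → Bool
  | .nil, _, _ => false
  | .node v l r, x, y =>
      ((y == v) && (l.rootVal == some x || r.rootVal == some x))
      || childB l x y || childB r x y

/-- `ancB t x y = true` iff `x` is a (strict) ancestor of `y` in `t`, i.e. `y` lies
in a subtree hanging from `x`. -/
def ancB : BTree → ℕ → ℕ → Bool
  | .nil, _, _ => false
  | .node v l r, x, y =>
      ((x == v) && (memB l y || memB r y)) || ancB l x y || ancB r x y

end BTree

/-- `x` is the leftmost-eligible extreme letter of `l`: the minimum or the maximum. -/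
def isExtreme (l : List ℕ) (x : ℕ) : Bool :=
  (l.min? == some x) || (l.max? == some x)

/-- Fuelled construction of the minmax tree of a list of distinct naturals:
split the list as `u ++ [m] ++ v` where `m` is the leftmost of the minimum and
maximum letters, put `m` at the root and recurse on `u` (left) and `v` (right). -/
def mmAux : ℕ → List ℕ → BTree
  | 0, _ => .nil
  | fuel+1, l =>
    if l.isEmpty then .nil
    else
      let k := l.findIdx (isExtreme l)
      .node (l.getD k 0) (mmAux fuel (l.take k)) (mmAux fuel (l.drop (k+1)))

/-- The minmax tree `T^m_p` of a word `l` (with distinct letters). -/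
def minmaxTree (l : List ℕ) : BTree := mmAux l.length l

/-- The word `p_1 p_2 … p_n` on the letters `{1,…,n}` associated to a permutation
`p` of `Fin n`. -/
def permList (n : ℕ) (p : Equiv.Perm (Fin n)) : List ℕ :=
  List.ofFn (fun i => (p i : ℕ) + 1)

/-- The `i`-th entry `p_i` (1-indexed) of the permutation `p`. -/
def entryAt (n : ℕ) (p : Equiv.Perm (Fin n)) (i : ℕ) : ℕ :=
  (permList n p).getD (i - 1) 0

/-!
Whether an entry `a` is a leaf of the minmax tree depends only on the suffix `a s` of the word
that starts at `a`. If the root lies to the left of `a`, the recursion passes to a right part that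
still ends with `a s`. If it lies to the right of `a`, every extreme letter of the word lies in `s`,
so `a s` has the same root, and both recursions pass to left parts that again differ only before
`a`. If the root is `a` itself, no extreme letter precedes it, so for `s` empty the word is `a`.

Write the suffix as `a b c t`. A word has at most two extreme letters (its minimum and maximum).
If none of `a, b, c` is extreme, the three rotations `a b c t`, `b c a t`, `c a b t` all have their
root at the same place inside `t`, and the question reduces to a shorter `t`. Otherwise the head
`x` of `x y z t` is a leaf exactly when `x` is not extreme but `y` is, and this happens for exactly
one rotation. So rotating the entries at positions `i, i+1, i+2` groups the permutations into
triples each containing exactly one counted permutation.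
-/

open List

section Extreme

variable {l l₁ l₂ : List ℕ} {a b c v : ℕ}

theorem isExtreme_eq_true_iff_or : isExtreme l v = true ↔ l.min? = some v ∨ l.max? = some v := by
  simp [isExtreme]

theorem isExtreme_eq_true_iff :
    isExtreme l v = true ↔ v ∈ l ∧ ((∀ b ∈ l, v ≤ b) ∨ (∀ b ∈ l, b ≤ v)) := by
  rw [isExtreme_eq_true_iff_or, min?_eq_some_iff, max?_eq_some_iff]
  tauto

theorem isExtreme_of_subset (hsub : l₂ ⊆ l₁) (hv : v ∈ l₂) (h : isExtreme l₁ v = true) :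
    isExtreme l₂ v = true := by
  rw [isExtreme_eq_true_iff] at h ⊢
  exact ⟨hv, h.2.imp (fun h b hb => h b (hsub hb)) (fun h b hb => h b (hsub hb))⟩

theorem isExtreme_eq_of_subset (hsub : l₂ ⊆ l₁) (hext : ∀ v, isExtreme l₁ v = true → v ∈ l₂) :
    isExtreme l₂ = isExtreme l₁ := by
  have hmin : l₂.min? = l₁.min? := by
    cases hm : l₁.min? with
    | none => simpa [min?_eq_none_iff.mp hm] using hsub
    | some m =>
      have hm' := min?_eq_some_iff.mp hm
      exact min?_eq_some_iff.mpr
        ⟨hext m (isExtreme_eq_true_iff_or.mpr (.inl hm)), fun b hb => hm'.2 b (hsub hb)⟩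
  have hmax : l₂.max? = l₁.max? := by
    cases hM : l₁.max? with
    | none => simpa [max?_eq_none_iff.mp hM] using hsub
    | some M =>
      have hM' := max?_eq_some_iff.mp hM
      exact max?_eq_some_iff.mpr
        ⟨hext M (isExtreme_eq_true_iff_or.mpr (.inr hM)), fun b hb => hM'.2 b (hsub hb)⟩
  funext v
  simp only [isExtreme, hmin, hmax]

theorem isExtreme_eq_of_perm (h : l₁ ~ l₂) : isExtreme l₁ = isExtreme l₂ :=
  isExtreme_eq_of_subset h.subset fun _ hv => h.mem_iff.mpr (isExtreme_eq_true_iff.mp hv).1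

theorem exists_isExtreme (hl : l ≠ []) : ∃ v ∈ l, isExtreme l v = true := by
  obtain ⟨m, hm⟩ := Option.ne_none_iff_exists'.mp (mt min?_eq_none_iff.mp hl)
  exact ⟨m, (min?_eq_some_iff.mp hm).1, isExtreme_eq_true_iff_or.mpr (.inl hm)⟩

theorem exists_isExtreme_ne (hb : b ∈ l) (hba : b ≠ a) :
    ∃ v ∈ l, v ≠ a ∧ isExtreme l v = true := by
  obtain ⟨m, hm⟩ := Option.ne_none_iff_exists'.mp (mt min?_eq_none_iff.mp (ne_nil_of_mem hb))
  obtain ⟨M, hM⟩ := Option.ne_none_iff_exists'.mp (mt max?_eq_none_iff.mp (ne_nil_of_mem hb))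
  have hm' := min?_eq_some_iff.mp hm
  have hM' := max?_eq_some_iff.mp hM
  by_cases hma : m = a
  · refine ⟨M, hM'.1, fun hMa => hba ?_, isExtreme_eq_true_iff_or.mpr (.inr hM)⟩
    have := hm'.2 b hb
    have := hM'.2 b hb
    omega
  · exact ⟨m, hm'.1, hma, isExtreme_eq_true_iff_or.mpr (.inl hm)⟩

theorem not_isExtreme_three (hab : a ≠ b) (hac : a ≠ c) (hbc : b ≠ c) :
    ¬ (isExtreme l a = true ∧ isExtreme l b = true ∧ isExtreme l c = true) := by
  simp only [isExtreme_eq_true_iff_or]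
  grind

theorem isExtreme_pair_left : isExtreme [a, b] a = true := by
  rw [isExtreme_eq_true_iff]
  refine ⟨mem_cons_self, ?_⟩
  rcases le_total a b with h | h
  · exact .inl (by simp [h])
  · exact .inr (by simp [h])

end Extreme

def rootIndex (l : List ℕ) : ℕ := l.findIdx (isExtreme l)

section RootIndex

variable {l : List ℕ} {v k : ℕ}

theorem rootIndex_lt_length (hl : l ≠ []) : rootIndex l < l.length :=
  findIdx_lt_length_of_exists (exists_isExtreme hl)

theorem isExtreme_eq_false_of_mem_take (hv : v ∈ l.take k) (hk : k ≤ rootIndex l) :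
    isExtreme l v = false := by
  obtain ⟨j, hj, rfl⟩ := mem_take_iff_getElem.mp hv
  rw [rootIndex] at hk
  exact not_of_lt_findIdx (by omega)

theorem rootIndex_append {u t : List ℕ} (hu : ∀ v ∈ u, isExtreme (u ++ t) v = false) :
    rootIndex (u ++ t) = u.length + t.findIdx (isExtreme (u ++ t)) := by
  rw [rootIndex, findIdx_append, findIdx_eq_length_of_false hu, if_neg (lt_irrefl _), add_comm]

end RootIndex

theorem mmAux_nil (f : ℕ) : mmAux f [] = .nil := by
  cases f <;> rfl

theorem mmAux_of_ne_nil (f : ℕ) {l : List ℕ} (hl : l ≠ []) :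
    mmAux (f + 1) l = .node (l.getD (rootIndex l) 0) (mmAux f (l.take (rootIndex l)))
      (mmAux f (l.drop (rootIndex l + 1))) := by
  simp [mmAux, rootIndex, hl]

theorem mmAux_eq_of_length_le : ∀ {f g : ℕ} {l : List ℕ}, l.length ≤ f → l.length ≤ g →
    mmAux f l = mmAux g l
  | 0, _, l, hf, _ => by rw [eq_nil_of_length_eq_zero (l := l) (by omega), mmAux_nil, mmAux_nil]
  | _, 0, l, _, hg => by rw [eq_nil_of_length_eq_zero (l := l) (by omega), mmAux_nil, mmAux_nil]
  | f + 1, g + 1, l, hf, hg => by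
    rcases eq_or_ne l [] with rfl | hl
    · rw [mmAux_nil, mmAux_nil]
    have := rootIndex_lt_length hl
    rw [mmAux_of_ne_nil f hl, mmAux_of_ne_nil g hl,
      mmAux_eq_of_length_le (f := f) (g := g) (by simp; omega) (by simp; omega),
      mmAux_eq_of_length_le (f := f) (g := g) (by simp; omega) (by simp; omega)]

theorem minmaxTree_nil : minmaxTree [] = .nil := rfl

theorem minmaxTree_of_ne_nil {l : List ℕ} (hl : l ≠ []) :
    minmaxTree l = .node (l[rootIndex l]'(rootIndex_lt_length hl))
      (minmaxTree (l.take (rootIndex l))) (minmaxTree (l.drop (rootIndex l + 1))) := by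
  have hlen := rootIndex_lt_length hl
  obtain ⟨f, hf⟩ : ∃ f, l.length = f + 1 := ⟨l.length - 1, by omega⟩
  rw [minmaxTree, hf, mmAux_of_ne_nil f hl, getD_eq_getElem _ _ hlen, minmaxTree, minmaxTree,
    mmAux_eq_of_length_le (g := (l.take (rootIndex l)).length) (by simp; omega) le_rfl,
    mmAux_eq_of_length_le (g := (l.drop (rootIndex l + 1)).length) (by simp; omega) le_rfl]

theorem minmaxTree_eq_nil_iff {l : List ℕ} : minmaxTree l = .nil ↔ l = [] := by
  refine ⟨fun h => ?_, fun h => h ▸ minmaxTree_nil⟩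
  by_contra hl
  rw [minmaxTree_of_ne_nil hl] at h
  cases h

theorem memB_minmaxTree (a : ℕ) (l : List ℕ) : (minmaxTree l).memB a = true ↔ a ∈ l := by
  rcases eq_or_ne l [] with rfl | hl
  · simp [minmaxTree_nil, BTree.memB]
  have := rootIndex_lt_length hl
  rw [minmaxTree_of_ne_nil hl, BTree.memB, Bool.or_eq_true, Bool.or_eq_true, beq_iff_eq,
    memB_minmaxTree a (l.take (rootIndex l)), memB_minmaxTree a (l.drop (rootIndex l + 1))]
  conv_rhs => rw [← take_append_drop (rootIndex l) l, drop_eq_getElem_cons this]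
  simp only [mem_append, mem_cons]
  tauto
termination_by l.length
decreasing_by all_goals simp; omega

namespace BTree

variable {v a : ℕ} {L R : BTree}

theorem numChildren_eq_zero_of_memB_eq_false :
    ∀ {t : BTree}, t.memB a = false → t.numChildren a = 0
  | .nil, _ => rfl
  | .node v L R, h => by
    simp only [memB, Bool.or_eq_false_iff, beq_eq_false_iff_ne] at h
    rw [numChildren, if_neg h.1.1, numChildren_eq_zero_of_memB_eq_false h.1.2,
      numChildren_eq_zero_of_memB_eq_false h.2]

theorem isLeaf_node_iff_left (hne : a ≠ v) (hR : R.memB a = false) :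
    (node v L R).IsLeaf a ↔ L.IsLeaf a := by
  simp [IsLeaf, memB, numChildren, hne, hR, numChildren_eq_zero_of_memB_eq_false hR]

theorem isLeaf_node_iff_right (hne : a ≠ v) (hL : L.memB a = false) :
    (node v L R).IsLeaf a ↔ R.IsLeaf a := by
  simp [IsLeaf, memB, numChildren, hne, hL, numChildren_eq_zero_of_memB_eq_false hL]

theorem isLeaf_node_self : (node v L R).IsLeaf v ↔ L = nil ∧ R = nil := by
  simp [IsLeaf, memB, numChildren]

end BTree

section Leaf

variable {l x s u t : List ℕ} {a : ℕ}

theorem memB_minmaxTree_eq_false (ha : a ∉ l) : (minmaxTree l).memB a = false := by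
  rw [← Bool.not_eq_true, memB_minmaxTree]
  exact ha

theorem isLeaf_minmaxTree_iff_take (hnd : l.Nodup) (ha : a ∈ l.take (rootIndex l)) :
    (minmaxTree l).IsLeaf a ↔ (minmaxTree (l.take (rootIndex l))).IsLeaf a := by
  have hl : l ≠ [] := by rintro rfl; simp at ha
  have hdisj := disjoint_take_drop hnd (le_refl (rootIndex l))
  rw [drop_eq_getElem_cons (rootIndex_lt_length hl)] at hdisj
  rw [minmaxTree_of_ne_nil hl]
  exact BTree.isLeaf_node_iff_left (fun h => hdisj ha (h ▸ mem_cons_self))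
    (memB_minmaxTree_eq_false fun h => hdisj ha (mem_cons_of_mem _ h))

theorem isLeaf_minmaxTree_iff_drop (hnd : l.Nodup) (ha : a ∈ l.drop (rootIndex l + 1)) :
    (minmaxTree l).IsLeaf a ↔ (minmaxTree (l.drop (rootIndex l + 1))).IsLeaf a := by
  have hl : l ≠ [] := by rintro rfl; simp at ha
  have hnd' := hnd.sublist (drop_sublist (rootIndex l) l)
  rw [drop_eq_getElem_cons (rootIndex_lt_length hl), nodup_cons] at hnd'
  rw [minmaxTree_of_ne_nil hl]
  exact BTree.isLeaf_node_iff_right (fun h => hnd'.1 (h ▸ ha))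
    (memB_minmaxTree_eq_false fun h => disjoint_take_drop hnd (Nat.le_succ _) h ha)

theorem isLeaf_minmaxTree_of_rootIndex_eq (h : rootIndex (x ++ a :: s) = x.length) :
    (minmaxTree (x ++ a :: s)).IsLeaf a ↔ x = [] ∧ s = [] := by
  rw [minmaxTree_of_ne_nil (by simp)]
  simp [h, BTree.isLeaf_node_self, minmaxTree_eq_nil_iff]


theorem isLeaf_minmaxTree_cons_of_isExtreme (h : isExtreme (a :: s) a = true) :
    (minmaxTree (a :: s)).IsLeaf a ↔ s = [] := by
  have hroot : rootIndex (([] : List ℕ) ++ a :: s) = ([] : List ℕ).length := by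
    simp [rootIndex, findIdx_cons, h]
  simpa using isLeaf_minmaxTree_of_rootIndex_eq hroot

theorem isLeaf_minmaxTree_append_iff_take (hnd : (u ++ t).Nodup) (ha : a ∈ u)
    (hu : ∀ v ∈ u, isExtreme (u ++ t) v = false) :
    (minmaxTree (u ++ t)).IsLeaf a ↔
      (minmaxTree (u ++ t.take (t.findIdx (isExtreme (u ++ t))))).IsLeaf a := by
  have ha' : a ∈ (u ++ t).take (rootIndex (u ++ t)) := by
    rw [rootIndex_append hu, take_length_add_append]
    exact mem_append_left _ ha
  rw [isLeaf_minmaxTree_iff_take hnd ha', rootIndex_append hu, take_length_add_append]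

end Leaf

theorem isLeaf_minmaxTree_append_cons {x s : List ℕ} {a : ℕ} (hnd : (x ++ a :: s).Nodup) :
    (minmaxTree (x ++ a :: s)).IsLeaf a ↔ (minmaxTree (a :: s)).IsLeaf a := by
  have hlt := rootIndex_lt_length (l := x ++ a :: s) (by simp)
  have hax : a ∉ x := fun hx => disjoint_of_nodup_append hnd hx mem_cons_self
  rcases lt_trichotomy (rootIndex (x ++ a :: s)) x.length with h | h | h
  · have hdrop : (x ++ a :: s).drop (rootIndex (x ++ a :: s) + 1) =
        x.drop (rootIndex (x ++ a :: s) + 1) ++ a :: s := drop_append_of_le_length (by omega)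
    rw [isLeaf_minmaxTree_iff_drop hnd (by simp [hdrop]), hdrop]
    refine isLeaf_minmaxTree_append_cons (x := x.drop (rootIndex (x ++ a :: s) + 1)) ?_
    rw [← hdrop]
    exact hnd.sublist (drop_sublist _ _)
  · have hext : isExtreme (x ++ a :: s) a = true := by
      simpa using ((findIdx_eq (h ▸ hlt)).mp h).1
    rw [isLeaf_minmaxTree_of_rootIndex_eq h,
      isLeaf_minmaxTree_cons_of_isExtreme (isExtreme_of_subset (by simp) (by simp) hext)]
    refine ⟨And.right, fun hs => ⟨?_, hs⟩⟩
    subst hs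
    by_contra hx
    obtain ⟨v, hv, hva, hvext⟩ :=
      exists_isExtreme_ne (mem_append_left [a] (head_mem hx))
        (ne_of_mem_of_not_mem (head_mem hx) hax)
    have hvx : v ∈ (x ++ [a]).take x.length := by
      simpa using (mem_append.mp hv).resolve_right (by simpa using hva)
    rw [isExtreme_eq_false_of_mem_take hvx h.ge] at hvext
    cases hvext
  · rw [show x ++ a :: s = x ++ [a] ++ s by simp] at hnd h hlt ⊢
    have hpre : ∀ v ∈ x ++ [a], isExtreme (x ++ [a] ++ s) v = false := fun v hv =>
      isExtreme_eq_false_of_mem_take (k := (x ++ [a]).length) (by rwa [take_left])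
        (by simp only [length_append, length_singleton]; omega)
    have hsuf : isExtreme ([a] ++ s) = isExtreme (x ++ [a] ++ s) := by
      refine isExtreme_eq_of_subset (by simp) fun v hv => ?_
      rcases mem_append.mp (isExtreme_eq_true_iff.mp hv).1 with hvxa | hvs
      · rw [hpre v hvxa] at hv
        cases hv
      · exact mem_append_right _ hvs
    have hk : s.findIdx (isExtreme (x ++ [a] ++ s)) < s.length := by
      have := rootIndex_append hpre
      simp only [length_append, length_singleton] at this hlt
      omega
    rw [isLeaf_minmaxTree_append_iff_take hnd (by simp) hpre, show a :: s = [a] ++ s from rfl,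
      isLeaf_minmaxTree_append_iff_take (u := [a]) (t := s)
        (hnd.sublist (by rw [append_assoc]; exact sublist_append_right x _)) (mem_singleton_self a)
        (fun v hv => by rw [hsuf, mem_singleton.mp hv]; exact hpre a (by simp)), hsuf]
    generalize s.findIdx (isExtreme (x ++ [a] ++ s)) = k at hk ⊢
    simpa using isLeaf_minmaxTree_append_cons (x := x) (a := a) (s := s.take k)
      (by simpa using hnd.sublist ((take_sublist k s).append_left _))
termination_by x.length + s.length
decreasing_by all_goals simp only [length_take, length_drop]; omega

section Rotation

variable {x y z : ℕ} {t : List ℕ}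

theorem isLeaf_minmaxTree_cons₃_iff (hnd : (x :: y :: z :: t).Nodup)
    (h : isExtreme (x :: y :: z :: t) x ∨ isExtreme (x :: y :: z :: t) y ∨
      isExtreme (x :: y :: z :: t) z) :
    (minmaxTree (x :: y :: z :: t)).IsLeaf x ↔
      isExtreme (x :: y :: z :: t) x = false ∧ isExtreme (x :: y :: z :: t) y = true := by
  cases hx : isExtreme (x :: y :: z :: t) x
  · cases hy : isExtreme (x :: y :: z :: t) y
    · have hz : isExtreme (x :: y :: z :: t) z = true := by simpa [hx, hy] using h
      have key := isLeaf_minmaxTree_append_iff_take (u := [x, y]) (t := z :: t) (a := x) hnd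
        (by simp) (by simp [hx, hy])
      simp only [cons_append, nil_append, findIdx_cons, hz, cond_true, take_zero] at key
      rw [key, isLeaf_minmaxTree_cons_of_isExtreme isExtreme_pair_left]
      simp
    · have key := isLeaf_minmaxTree_append_iff_take (u := [x]) (t := y :: z :: t) (a := x) hnd
        (by simp) (by simp [hx])
      simp only [cons_append, nil_append, findIdx_cons, hy, cond_true, take_zero] at key
      rw [key, isLeaf_minmaxTree_cons_of_isExtreme (by simp [isExtreme])]
      simp
  · rw [isLeaf_minmaxTree_cons_of_isExtreme hx]
    simp

theorem isLeaf_minmaxTree_cons₃_iff_take (hnd : (x :: y :: z :: t).Nodup)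
    (hx : isExtreme (x :: y :: z :: t) x = false) (hy : isExtreme (x :: y :: z :: t) y = false)
    (hz : isExtreme (x :: y :: z :: t) z = false) :
    (minmaxTree (x :: y :: z :: t)).IsLeaf x ↔
      (minmaxTree (x :: y :: z :: t.take (t.findIdx (isExtreme (x :: y :: z :: t))))).IsLeaf
        x := by
  have key := isLeaf_minmaxTree_append_iff_take (u := [x, y, z]) (t := t) (a := x) hnd
    (by simp) (by simp [hx, hy, hz])
  simpa only [cons_append, nil_append] using key

end Rotation

theorem isLeaf_minmaxTree_rotations {a b c : ℕ} {t : List ℕ} (hnd : (a :: b :: c :: t).Nodup) :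
    (if (minmaxTree (a :: b :: c :: t)).IsLeaf a then 1 else 0) +
      (if (minmaxTree (b :: c :: a :: t)).IsLeaf b then 1 else 0) +
      (if (minmaxTree (c :: a :: b :: t)).IsLeaf c then 1 else 0) = 1 := by
  have hperm₂ : b :: c :: a :: t ~ a :: b :: c :: t := by grind
  have hperm₃ : c :: a :: b :: t ~ a :: b :: c :: t := by grind
  have hE₂ := isExtreme_eq_of_perm hperm₂
  have hE₃ := isExtreme_eq_of_perm hperm₃
  have hnd₂ := hperm₂.nodup_iff.mpr hnd
  have hnd₃ := hperm₃.nodup_iff.mpr hnd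
  by_cases h : isExtreme (a :: b :: c :: t) a ∨ isExtreme (a :: b :: c :: t) b ∨
      isExtreme (a :: b :: c :: t) c
  · have hnot : ¬ (isExtreme (a :: b :: c :: t) a ∧ isExtreme (a :: b :: c :: t) b ∧
        isExtreme (a :: b :: c :: t) c) := by
      simp only [nodup_cons, mem_cons, not_or] at hnd
      exact not_isExtreme_three hnd.1.1 hnd.1.2.1 hnd.2.1.1
    simp only [isLeaf_minmaxTree_cons₃_iff hnd h,
      isLeaf_minmaxTree_cons₃_iff hnd₂ (by rw [hE₂]; tauto),
      isLeaf_minmaxTree_cons₃_iff hnd₃ (by rw [hE₃]; tauto), hE₂, hE₃]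
    revert h hnot
    cases isExtreme (a :: b :: c :: t) a <;> cases isExtreme (a :: b :: c :: t) b <;>
      cases isExtreme (a :: b :: c :: t) c <;> simp
  · simp only [not_or, Bool.not_eq_true] at h
    obtain ⟨ha, hb, hc⟩ := h
    obtain ⟨v, hv, hvE⟩ := exists_isExtreme (l := a :: b :: c :: t) (cons_ne_nil _ _)
    have hk : t.findIdx (isExtreme (a :: b :: c :: t)) < t.length := by
      refine findIdx_lt_length_of_exists ⟨v, ?_, hvE⟩
      rcases mem_cons.mp hv with rfl | hv
      · simp [ha] at hvE
      rcases mem_cons.mp hv with rfl | hv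
      · simp [hb] at hvE
      rcases mem_cons.mp hv with rfl | hv
      · simp [hc] at hvE
      exact hv
    simp only [isLeaf_minmaxTree_cons₃_iff_take hnd ha hb hc,
      isLeaf_minmaxTree_cons₃_iff_take hnd₂ (hE₂ ▸ hb) (hE₂ ▸ hc) (hE₂ ▸ ha),
      isLeaf_minmaxTree_cons₃_iff_take hnd₃ (hE₃ ▸ hc) (hE₃ ▸ ha) (hE₃ ▸ hb), hE₂, hE₃]
    exact isLeaf_minmaxTree_rotations
      (hnd.sublist ((((take_sublist _ t).cons_cons c).cons_cons b).cons_cons a))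
termination_by t.length
decreasing_by simp only [length_take]; omega

theorem three_mul_card_filter_eq {α : Type*} [Fintype α] (f : α ≃ α) (P : α → Prop)
    [DecidablePred P]
    (h : ∀ x, (if P x then 1 else 0) + (if P (f x) then 1 else 0) + (if P (f (f x)) then 1 else 0)
      = 1) :
    3 * (Finset.univ.filter P).card = Fintype.card α := by
  have hshift : ∀ g : α → ℕ, ∑ x, g (f x) = ∑ x, g x := Equiv.sum_comp f
  calc 3 * (Finset.univ.filter P).card
      = ∑ x, ((if P x then 1 else 0) + (if P (f x) then 1 else 0) +
          (if P (f (f x)) then 1 else 0)) := by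
        rw [Finset.sum_add_distrib, Finset.sum_add_distrib,
          hshift (fun x => if P (f x) then 1 else 0), hshift (fun x => if P x then 1 else 0),
          Finset.card_filter]
        ring
    _ = Fintype.card α := by simp [h]

section PermList

variable {n : ℕ} (p : Equiv.Perm (Fin n))

theorem length_permList : (permList n p).length = n := by
  simp [permList]

theorem nodup_permList : (permList n p).Nodup :=
  nodup_ofFn.mpr fun i j h => p.injective (Fin.ext (by simpa using h))

theorem getElem_permList {j : ℕ} (hj : j < (permList n p).length) :
    (permList n p)[j] = (p ⟨j, by simpa [length_permList] using hj⟩ : ℕ) + 1 := by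
  simp [permList]

theorem drop_permList_eq_cons {j : ℕ} (hj : j < n) :
    (permList n p).drop j = ((p ⟨j, hj⟩ : ℕ) + 1) :: (permList n p).drop (j + 1) := by
  rw [drop_eq_getElem_cons (by simpa [length_permList] using hj), getElem_permList]

theorem drop_permList_mul {σ : Equiv.Perm (Fin n)} {m : ℕ} (hσ : ∀ k : Fin n, m ≤ k → σ k = k) :
    (permList n (p * σ)).drop m = (permList n p).drop m := by
  refine ext_getElem (by simp [length_permList]) fun k h₁ h₂ => ?_
  simp only [getElem_drop, getElem_permList, Equiv.Perm.mul_apply]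
  rw [hσ _ (by simp)]

theorem isLeaf_entryAt_iff {j : ℕ} (hj : j + 2 < n) :
    (minmaxTree (permList n p)).IsLeaf (entryAt n p (j + 1)) ↔
      (minmaxTree (((p ⟨j, by omega⟩ : ℕ) + 1) :: ((p ⟨j + 1, by omega⟩ : ℕ) + 1) ::
        ((p ⟨j + 2, hj⟩ : ℕ) + 1) ::
        (permList n p).drop (j + 3))).IsLeaf ((p ⟨j, by omega⟩ : ℕ) + 1) := by
  have hentry : entryAt n p (j + 1) = (p ⟨j, by omega⟩ : ℕ) + 1 := by
    rw [entryAt, Nat.add_sub_cancel, getD_eq_getElem _ _ (by simp [length_permList]; omega),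
      getElem_permList]
  have hsplit := take_append_drop j (permList n p)
  rw [drop_permList_eq_cons p (by omega)] at hsplit
  rw [hentry, ← drop_permList_eq_cons p hj, ← drop_permList_eq_cons, ← drop_permList_eq_cons,
    drop_permList_eq_cons p (by omega)]
  conv_lhs => rw [← hsplit]
  refine isLeaf_minmaxTree_append_cons ?_
  rw [hsplit]
  exact nodup_permList p

end PermList

theorem exists_perm_rotate_three {n j : ℕ} (hj : j + 2 < n) :
    ∃ c : Equiv.Perm (Fin n), c ⟨j, by omega⟩ = ⟨j + 1, by omega⟩ ∧
      c ⟨j + 1, by omega⟩ = ⟨j + 2, hj⟩ ∧ c ⟨j + 2, hj⟩ = ⟨j, by omega⟩ ∧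
      ∀ k : Fin n, j + 3 ≤ k → c k = k := by
  refine ⟨Equiv.swap ⟨j, by omega⟩ ⟨j + 1, by omega⟩ * Equiv.swap ⟨j + 1, by omega⟩ ⟨j + 2, hj⟩,
    ?_, ?_, ?_, fun k hk => ?_⟩
  iterate 3 simp [Equiv.swap_apply_of_ne_of_ne, Fin.ext_iff]
  have hne : ∀ i (hi : i < n), i < j + 3 → k ≠ ⟨i, hi⟩ := fun i hi hij h => by
    rw [h] at hk
    exact absurd hk (by simp only [not_le]; omega)
  rw [Equiv.Perm.mul_apply, Equiv.swap_apply_of_ne_of_ne (hne _ _ (by omega)) (hne _ _ (by omega)),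
    Equiv.swap_apply_of_ne_of_ne (hne _ _ (by omega)) (hne _ _ (by omega))]

theorem entry_leaf_count_general (n : ℕ) (i : ℕ) (hi1 : 1 ≤ i) (hi2 : i ≤ n - 2) :
    (Finset.univ.filter (fun p : Equiv.Perm (Fin n) =>
        (minmaxTree (permList n p)).IsLeaf (entryAt n p i))).card = n.factorial / 3 := by
  obtain ⟨j, rfl⟩ : ∃ j, i = j + 1 := ⟨i - 1, by omega⟩
  have hj : j + 2 < n := by omega
  obtain ⟨c, hc₀, hc₁, hc₂, hc⟩ := exists_perm_rotate_three hj
  have hcount := three_mul_card_filter_eq (Equiv.mulRight c)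
    (fun p => (minmaxTree (permList n p)).IsLeaf (entryAt n p (j + 1))) fun p => by
      have hnd := (nodup_permList p).sublist (drop_sublist j _)
      rw [drop_permList_eq_cons p (by omega), drop_permList_eq_cons p (by omega),
        drop_permList_eq_cons p hj] at hnd
      simp only [Equiv.coe_mulRight, isLeaf_entryAt_iff _ hj, Equiv.Perm.mul_apply, hc₀, hc₁, hc₂,
        drop_permList_mul _ hc]
      exact isLeaf_minmaxTree_rotations hnd
  rw [Fintype.card_perm, Fintype.card_fin] at hcount
  omega

/-- For `n ≥ 3` and `1 ≤ i ≤ n − 2`, the number of permutations `p`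
of `{1,…,n}` whose minmax tree contains the entry `p_i` as a leaf is exactly `n!/3`. -/
theorem entry_leaf_count (n : ℕ) (hn : 3 ≤ n) (i : ℕ) (hi1 : 1 ≤ i) (hi2 : i ≤ n - 2) :
    (Finset.univ.filter (fun p : Equiv.Perm (Fin n) =>
        (minmaxTree (permList n p)).IsLeaf (entryAt n p i))).card = n.factorial / 3 :=
  entry_leaf_count_general n i hi1 hi2
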